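/- arXiv:0911.0567 — 2 statements merged into one kernel-verified Lean document; each statement's English description precedes it below -/
import Mathlib

section
/- For the depolarizing channels κ_{d,p} and κ_{d,q} on d-dimensional states (with p,q ∈ [0,1]), the superfidelity between their Jamiołkowski states equals G = (1/d²)·(1 + (d²-1)pq + (d²-1)·√((1-p²)(1-q²))). -/
open Matrix ComplexOrder

noncomputable def sG {n : Type*} [Fintype n]
    (ρ σ : Matrix n n ℂ) : ℝ :=
  (trace (ρ * σ)).re +
    Real.sqrt (1 - (trace (ρ * ρ)).re) * Real.sqrt (1 - (trace (σ * σ)).re)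

/-- The Jamiołkowski state of the depolarizing channel κ_{d,p}:
ρ = p·|Ω⟩⟨Ω| + (1-p)·𝟙/d², where |Ω⟩ is the maximally entangled state. -/
noncomputable def depolJam (d : ℕ) (p : ℝ) :
    Matrix (Fin d × Fin d) (Fin d × Fin d) ℂ :=
  (p : ℂ) • (Matrix.of fun a b =>
      if a.1 = a.2 ∧ b.1 = b.2 then (1 : ℂ) / d else 0) +
    (((1 - p : ℝ) : ℂ) / (d ^ 2 : ℂ)) • (1 : Matrix (Fin d × Fin d) (Fin d × Fin d) ℂ)

/-! Both Jamiołkowski states lie in the pencil spanned by the projector `|Ω⟩⟨Ω|` and `𝟙`,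
so every trace in the superfidelity reduces to `tr |Ω⟩⟨Ω| = 1` and `tr 𝟙 = d²`.
The two purity defects `1 - tr ρ²` share the factor `(d² - 1)/d²`, which comes out of the
product of square roots. -/

theorem Real.sqrt_mul_mul_sqrt_mul {a x : ℝ} (ha : 0 ≤ a) (hx : 0 ≤ x) (y : ℝ) :
    √(a * x) * √(a * y) = a * √(x * y) := by
  rw [← Real.sqrt_mul (mul_nonneg ha hx), mul_mul_mul_comm,
    Real.sqrt_mul (mul_self_nonneg a), Real.sqrt_mul_self ha]

namespace Matrix

variable {n R : Type*} [Fintype n] [DecidableEq n] [CommRing R]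

theorem trace_smul_add_smul_one_mul {P : Matrix n n R} (hP : IsIdempotentElem P)
    (a b c e : R) :
    trace ((a • P + b • 1) * (c • P + e • 1)) =
      (a * c + a * e + b * c) * trace P + b * e * Fintype.card n := by
  simp only [add_mul, mul_add, smul_mul_smul_comm, hP.eq, Matrix.mul_one, Matrix.one_mul,
    trace_add, trace_smul, trace_one, smul_eq_mul]
  ring

end Matrix

/-- `|Ω⟩⟨Ω|` for the maximally entangled vector `Ω = d^{-1/2} ∑ᵢ |i i⟩`. -/
noncomputable def maxEntProj (K : Type*) [Field K] (d : ℕ) :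
    Matrix (Fin d × Fin d) (Fin d × Fin d) K :=
  Matrix.of fun a b => if a.1 = a.2 ∧ b.1 = b.2 then 1 / d else 0

section maxEntProj

variable {K : Type*} [Field K] {d : ℕ}

theorem isIdempotentElem_maxEntProj (hd : (d : K) ≠ 0) :
    IsIdempotentElem (maxEntProj K d) := by
  ext a b
  simp only [maxEntProj, mul_apply, of_apply]
  by_cases ha : a.1 = a.2 <;> by_cases hb : b.1 = b.2 <;>
    simp [ha, hb, Fintype.sum_prod_type]
  field_simp

theorem trace_maxEntProj (hd : (d : K) ≠ 0) : trace (maxEntProj K d) = 1 := by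
  simp [trace, maxEntProj, Fintype.sum_prod_type]
  field_simp

end maxEntProj

section depolJam

variable {d : ℕ}

theorem depolJam_eq (p : ℝ) :
    depolJam d p = (p : ℂ) • maxEntProj ℂ d + (((1 - p : ℝ) : ℂ) / (d ^ 2 : ℂ)) • 1 :=
  rfl

theorem trace_depolJam_mul (hd : 0 < d) (p q : ℝ) :
    trace (depolJam d p * depolJam d q) = (((1 + ((d : ℝ) ^ 2 - 1) * p * q) / d ^ 2 : ℝ) : ℂ) := by
  have hdC : (d : ℂ) ≠ 0 := Nat.cast_ne_zero.mpr hd.ne'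
  rw [depolJam_eq, depolJam_eq,
    trace_smul_add_smul_one_mul (isIdempotentElem_maxEntProj hdC), trace_maxEntProj hdC]
  simp only [Fintype.card_prod, Fintype.card_fin, Nat.cast_mul]
  push_cast
  field_simp
  ring

theorem one_sub_re_trace_depolJam_sq (hd : 0 < d) (p : ℝ) :
    1 - (trace (depolJam d p * depolJam d p)).re = ((d : ℝ) ^ 2 - 1) / d ^ 2 * (1 - p ^ 2) := by
  rw [trace_depolJam_mul hd, Complex.ofReal_re]
  field_simp
  ring

end depolJam

theorem superfidelity_depolarizing_general (d : ℕ) (hd : 0 < d)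
    (p q : ℝ) (hp0 : 0 ≤ p) (hp1 : p ≤ 1) :
    sG (depolJam d p) (depolJam d q) =
      (1 / (d ^ 2 : ℝ)) *
        (1 + ((d ^ 2 : ℝ) - 1) * p * q +
          ((d ^ 2 : ℝ) - 1) * Real.sqrt ((1 - p ^ 2) * (1 - q ^ 2))) := by
  have hd1 : (1 : ℝ) ≤ d := by exact_mod_cast hd
  have hdefect : 0 ≤ ((d : ℝ) ^ 2 - 1) / d ^ 2 := div_nonneg (by nlinarith) (by positivity)
  have hp : 0 ≤ 1 - p ^ 2 := by nlinarith
  rw [sG, trace_depolJam_mul hd, one_sub_re_trace_depolJam_sq hd,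
    one_sub_re_trace_depolJam_sq hd, Real.sqrt_mul_mul_sqrt_mul hdefect hp, Complex.ofReal_re]
  ring

theorem superfidelity_depolarizing (d : ℕ) (hd : 0 < d)
    (p q : ℝ) (hp0 : 0 ≤ p) (hp1 : p ≤ 1) (hq0 : 0 ≤ q) (hq1 : q ≤ 1) :
    sG (depolJam d p) (depolJam d q) =
      (1 / (d ^ 2 : ℝ)) *
        (1 + ((d ^ 2 : ℝ) - 1) * p * q +
          ((d ^ 2 : ℝ) - 1) * Real.sqrt ((1 - p ^ 2) * (1 - q ^ 2))) :=
  superfidelity_depolarizing_general d hd p q hp0 hp1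
end

section
/- For two generalized Pauli channels with probability matrices p, q (entrywise nonnegative d×d matrices summing to 1), the superfidelity between their Jamiołkowski states equals tr(pqᵀ) + √(1 - tr(ppᵀ))·√(1 - tr(qqᵀ)). -/
open Matrix ComplexOrder

/-- Shift matrix X on ℂ^d : X = Σ_j |j-1 mod d⟩⟨j|. -/
def shiftX (d : ℕ) : Matrix (Fin d) (Fin d) ℂ :=
  Matrix.of fun a b => if ((a : ℕ) + 1) % d = (b : ℕ) then 1 else 0

/-- Clock matrix Z on ℂ^d. -/
noncomputable def clockZ (d : ℕ) : Matrix (Fin d) (Fin d) ℂ :=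
  Matrix.diagonal fun j => Complex.exp (2 * Real.pi * Complex.I * (j : ℕ) / d)

/-- Jamiołkowski state of the generalized Pauli channel with probability
matrix p: ρ = Σ_{i,j} p i j · (U_{ij} ⊗ 1)|Ω⟩⟨Ω|(U_{ij} ⊗ 1)†, with
U_{ij} = X^i Z^j; concretely the entries are given via the vectors
v_{ij}(a,b) = (1/√d)·(X^i Z^j)_{a b}. -/
noncomputable def pauliJam (d : ℕ) (p : Fin d → Fin d → ℝ) :
    Matrix (Fin d × Fin d) (Fin d × Fin d) ℂ :=
  ∑ i, ∑ j, (p i j : ℂ) •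
    (Matrix.of fun a b =>
      ((1 / Real.sqrt d : ℝ) : ℂ) * (shiftX d ^ (i : ℕ) * clockZ d ^ (j : ℕ)) a.1 a.2 *
        star (((1 / Real.sqrt d : ℝ) : ℂ) *
          (shiftX d ^ (i : ℕ) * clockZ d ^ (j : ℕ)) b.1 b.2))

/-! The vectorised clock-and-shift matrices X^i Z^j / √d form an orthonormal basis of ℂ^d ⊗ ℂ^d:
the shift part of the Hilbert–Schmidt product forces i = k, and the clock part is then a sum of
d-th roots of unity, which vanishes unless j = l. Both Jamiołkowski states are therefore diagonal
in this common basis with eigenvalues p i j and q i j, so each trace in G is a sum of products of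
eigenvalues. -/

section OrthonormalTrace

variable {R ι κ : Type*} [CommSemiring R] [Fintype ι] [Fintype κ]

theorem Matrix.trace_vecMulVec_mul_vecMulVec (a b c e : ι → R) :
    trace (vecMulVec a b * vecMulVec c e) = (b ⬝ᵥ c) * (e ⬝ᵥ a) := by
  rw [vecMulVec_mul_vecMulVec, trace_vecMulVec, dotProduct_smul, smul_eq_mul, dotProduct_comm a]

theorem Matrix.trace_sum_smul_vecMulVec_mul_of_orthonormal [StarRing R] [DecidableEq κ]
    (v : κ → ι → R) (hv : ∀ k l, star (v k) ⬝ᵥ v l = if k = l then 1 else 0) (p q : κ → R) :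
    trace ((∑ k, p k • vecMulVec (v k) (star (v k))) *
        ∑ k, q k • vecMulVec (v k) (star (v k))) = ∑ k, p k * q k := by
  simp_rw [Finset.sum_mul, Finset.mul_sum, smul_mul_smul, trace_sum, trace_smul,
    trace_vecMulVec_mul_vecMulVec, hv, smul_eq_mul]
  simp [eq_comm]

end OrthonormalTrace

theorem IsPrimitiveRoot.sum_star_pow_mul_pow {ζ : ℂ} {d : ℕ} (hζ : IsPrimitiveRoot ζ d)
    (j l : Fin d) :
    ∑ b : Fin d, star (ζ ^ ((b : ℕ) * j)) * ζ ^ ((b : ℕ) * l) = if j = l then (d : ℂ) else 0 := by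
  set x := star (ζ ^ (j : ℕ)) * ζ ^ (l : ℕ)
  have hterm (b : Fin d) : star (ζ ^ ((b : ℕ) * j)) * ζ ^ ((b : ℕ) * l) = x ^ (b : ℕ) := by
    simp only [x, mul_pow, star_pow, ← pow_mul, mul_comm]
  have hunit : star (ζ ^ (j : ℕ)) * ζ ^ (j : ℕ) = 1 := by
    rw [Complex.star_def, Complex.conj_mul', norm_pow, hζ.norm'_eq_one (Fin.pos j).ne']
    simp
  rw [Finset.sum_congr rfl fun b _ => hterm b, Fin.sum_univ_eq_sum_range (x ^ ·)]
  split_ifs with hjl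
  · subst hjl
    simp [x, hunit]
  · have hx : x ≠ 1 := fun hx => hjl <| Fin.ext <| hζ.pow_inj j.isLt l.isLt <| by
      have hx' : star (ζ ^ (j : ℕ)) * ζ ^ (l : ℕ) = 1 := hx
      linear_combination ζ ^ (l : ℕ) * hunit - ζ ^ (j : ℕ) * hx'
    have hxd : x ^ d = 1 := by
      rw [mul_pow, ← star_pow, pow_right_comm ζ (j : ℕ), pow_right_comm ζ (l : ℕ),
        hζ.pow_eq_one, one_pow, one_pow, star_one, mul_one]
    have hgeom := mul_neg_geom_sum x d
    rw [hxd, sub_self] at hgeom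
    exact (mul_eq_zero.mp hgeom).resolve_left (sub_ne_zero.mpr hx.symm)

section ClockShift

open Fin.NatCast

theorem shiftX_apply {d : ℕ} [NeZero d] (a b : Fin d) :
    shiftX d a b = if a + 1 = b then 1 else 0 := by
  simp only [shiftX, of_apply, Fin.ext_iff, Fin.val_add, Fin.val_one', Nat.add_mod_mod]

theorem shiftX_pow_apply {d : ℕ} [NeZero d] (n : ℕ) (a b : Fin d) :
    (shiftX d ^ n) a b = if a + (n : Fin d) = b then 1 else 0 := by
  induction n generalizing b with
  | zero => rw [pow_zero, Nat.cast_zero, add_zero, one_apply]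
  | succ n ih =>
    rw [pow_succ, mul_apply]
    simp_rw [ih, ite_mul, one_mul, zero_mul, Finset.sum_ite_eq, Finset.mem_univ, if_true]
    rw [shiftX_apply, Nat.cast_succ, add_assoc]

theorem clockZ_eq_diagonal (d : ℕ) :
    clockZ d = diagonal fun b : Fin d => Complex.exp (2 * Real.pi * Complex.I / d) ^ (b : ℕ) := by
  unfold clockZ
  congr 1
  funext b
  rw [← Complex.exp_nat_mul]
  ring_nf

theorem shiftX_pow_mul_clockZ_pow_apply {d : ℕ} [NeZero d] (i j : ℕ) (a b : Fin d) :
    (shiftX d ^ i * clockZ d ^ j) a b =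
      if a + (i : Fin d) = b then Complex.exp (2 * Real.pi * Complex.I / d) ^ ((b : ℕ) * j)
      else 0 := by
  rw [clockZ_eq_diagonal, diagonal_pow, mul_diagonal, shiftX_pow_apply, Pi.pow_apply, ← pow_mul,
    ite_mul, one_mul, zero_mul]

theorem sum_star_mul_shiftX_pow_mul_clockZ_pow {d : ℕ} (i j k l : Fin d) :
    ∑ a, ∑ b, star ((shiftX d ^ (i : ℕ) * clockZ d ^ (j : ℕ)) a b) *
        (shiftX d ^ (k : ℕ) * clockZ d ^ (l : ℕ)) a b =
      if i = k ∧ j = l then (d : ℂ) else 0 := by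
  have : NeZero d := ⟨(Fin.pos i).ne'⟩
  simp_rw [shiftX_pow_mul_clockZ_pow_apply, Fin.cast_val_eq_self, apply_ite star, star_zero,
    ite_mul, zero_mul, mul_ite, mul_zero, Finset.sum_ite_eq, Finset.mem_univ, if_true,
    add_right_inj]
  by_cases hik : i = k
  · subst hik
    simp only [if_true, true_and]
    exact (Equiv.sum_comp (Equiv.addRight i) _).trans
      ((Complex.isPrimitiveRoot_exp d (NeZero.ne d)).sum_star_pow_mul_pow j l)
  · simp [hik, Ne.symm hik]

end ClockShift

noncomputable def pauliVec (d : ℕ) (k : Fin d × Fin d) : Fin d × Fin d → ℂ :=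
  fun a => ((1 / Real.sqrt d : ℝ) : ℂ) * (shiftX d ^ (k.1 : ℕ) * clockZ d ^ (k.2 : ℕ)) a.1 a.2

theorem star_pauliVec_dotProduct_pauliVec {d : ℕ} (k l : Fin d × Fin d) :
    star (pauliVec d k) ⬝ᵥ pauliVec d l = if k = l then 1 else 0 := by
  have hd : (d : ℂ) ≠ 0 := Nat.cast_ne_zero.mpr (Fin.pos k.1).ne'
  have hnorm : star ((1 / Real.sqrt d : ℝ) : ℂ) * ((1 / Real.sqrt d : ℝ) : ℂ) = (d : ℂ)⁻¹ := by
    rw [Complex.star_def, Complex.conj_ofReal, ← Complex.ofReal_mul, ← sq, div_pow,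
      Real.sq_sqrt (Nat.cast_nonneg d)]
    push_cast
    rw [one_pow, one_div]
  simp only [dotProduct, pauliVec, Pi.star_apply, star_mul', mul_mul_mul_comm, hnorm,
    ← Finset.mul_sum, Fintype.sum_prod_type, sum_star_mul_shiftX_pow_mul_clockZ_pow, Prod.ext_iff]
  split_ifs
  · exact inv_mul_cancel₀ hd
  · exact mul_zero _

theorem pauliJam_eq_sum (d : ℕ) (p : Fin d → Fin d → ℝ) :
    pauliJam d p = ∑ k, (p k.1 k.2 : ℂ) • vecMulVec (pauliVec d k) (star (pauliVec d k)) := by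
  rw [pauliJam, Fintype.sum_prod_type]
  rfl

theorem trace_pauliJam_mul_pauliJam (d : ℕ) (p q : Fin d → Fin d → ℝ) :
    trace (pauliJam d p * pauliJam d q) = ((∑ i, ∑ j, p i j * q i j : ℝ) : ℂ) := by
  rw [pauliJam_eq_sum, pauliJam_eq_sum,
    trace_sum_smul_vecMulVec_mul_of_orthonormal _ star_pauliVec_dotProduct_pauliVec,
    Fintype.sum_prod_type]
  push_cast
  rfl

theorem superfidelity_generalized_pauli_general (d : ℕ)
    (p q : Fin d → Fin d → ℝ) :
    sG (pauliJam d p) (pauliJam d q) =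
      (∑ i, ∑ j, p i j * q i j) +
        Real.sqrt (1 - ∑ i, ∑ j, (p i j) ^ 2) *
          Real.sqrt (1 - ∑ i, ∑ j, (q i j) ^ 2) := by
  simp only [sG, trace_pauliJam_mul_pauliJam, Complex.ofReal_re, sq]

theorem superfidelity_generalized_pauli (d : ℕ) (hd : 0 < d)
    (p q : Fin d → Fin d → ℝ)
    (hp0 : ∀ i j, 0 ≤ p i j) (hq0 : ∀ i j, 0 ≤ q i j)
    (hp1 : ∑ i, ∑ j, p i j = 1) (hq1 : ∑ i, ∑ j, q i j = 1) :
    sG (pauliJam d p) (pauliJam d q) =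
      (∑ i, ∑ j, p i j * q i j) +
        Real.sqrt (1 - ∑ i, ∑ j, (p i j) ^ 2) *
          Real.sqrt (1 - ∑ i, ∑ j, (q i j) ^ 2) :=
  superfidelity_generalized_pauli_general d p q
end
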